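/- arXiv:1208.5413 — 7 statements merged into one kernel-verified Lean document; each statement's English description precedes it below -/
import Mathlib

section
/- Let F ⊆ {F_q → F_q} be a proper linear affine-invariant family of univariate functions (F ≠ all functions), let L ⊆ {F_q^m → F_q} be its m-dimensional lift (all functions whose restriction to every line, suitably parameterized, lies in F), and let N ⊆ F_q^m be a Nikodym set. Then |N| ≥ dim_{F_q}(L). -/
/-! A function of the lift that vanishes on a Nikodym set `N` vanishes everywhere: through any `x`
there is a line whose points other than `x` all lie in `N`, so the restriction of the function to
that line is a member of the univariate family supported on the single point `t = 0`. A proper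
translation-invariant family contains no such function, since its translates would span all
functions. Hence restriction to `N` is injective on the lift, and `dim L ≤ |N|`. -/

open Function

section TranslationInvariant

variable {K G : Type*} [Field K] [AddCommGroup G]

theorem Submodule.eq_top_of_single_mem [Finite G] [DecidableEq G] (S : Submodule K (G → K))
    (htrans : ∀ f ∈ S, ∀ b : G, (fun x => f (x + b)) ∈ S) {c : G} (hc : Pi.single c 1 ∈ S) :
    S = ⊤ := by
  have : Fintype G := Fintype.ofFinite G
  have hsingle : ∀ p : G, (Pi.single p 1 : G → K) ∈ S := fun p => by
    convert htrans _ hc (c - p) using 1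
    funext x
    have hshift : x + (c - p) = c ↔ x = p := by
      rw [← sub_eq_zero, show x + (c - p) - c = x - p by abel, sub_eq_zero]
    simp only [Pi.single_apply, hshift]
  refine eq_top_iff.mpr fun h _ => ?_
  rw [← Finset.univ_sum_single h]
  refine S.sum_mem fun p _ => ?_
  simpa only [← Pi.single_smul', smul_eq_mul, mul_one] using S.smul_mem (h p) (hsingle p)

theorem Submodule.apply_eq_zero_of_eq_zero_of_ne [Finite G] (S : Submodule K (G → K))
    (htrans : ∀ f ∈ S, ∀ b : G, (fun x => f (x + b)) ∈ S) (hS : S ≠ ⊤) {f : G → K} (hf : f ∈ S)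
    {c : G} (hoff : ∀ t, t ≠ c → f t = 0) : f c = 0 := by
  classical
  by_contra hfc
  have hf_eq : f = f c • Pi.single c 1 := by
    funext t
    by_cases htc : t = c
    · subst htc; simp
    · simp [hoff t htc, htc]
  have hsingle : Pi.single c 1 = (f c)⁻¹ • f :=
    calc Pi.single c 1 = ((f c)⁻¹ * f c) • Pi.single c 1 := by rw [inv_mul_cancel₀ hfc, one_smul]
      _ = (f c)⁻¹ • f := by rw [mul_smul, ← hf_eq]
  exact hS (S.eq_top_of_single_mem htrans (hsingle ▸ S.smul_mem _ hf))

end TranslationInvariant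

theorem eq_zero_of_eqOn_nikodym {K V : Type*} [Field K] [Finite K] [AddCommGroup V] [Module K V]
    (S : Submodule K (K → K)) (htrans : ∀ f ∈ S, ∀ b : K, (fun x => f (x + b)) ∈ S)
    (hS : S ≠ ⊤) {g : V → K} (hg : ∀ x y : V, y ≠ 0 → (fun t => g (x + t • y)) ∈ S)
    {N : Set V} (hN : ∀ x : V, ∃ y : V, y ≠ 0 ∧ ∀ t : K, t ≠ 0 → x + t • y ∈ N)
    (hgN : Set.EqOn g 0 N) : g = 0 := by
  funext x
  obtain ⟨y, hy, hline⟩ := hN x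
  simpa using S.apply_eq_zero_of_eq_zero_of_ne htrans hS (hg x y hy) (c := 0)
    fun t ht => hgN (hline t ht)

theorem Submodule.finrank_le_natCard_of_eqOn_zero {K V : Type*} [Field K] [Finite V]
    (L : Submodule K (V → K)) (N : Set V) (hN : ∀ g ∈ L, Set.EqOn g 0 N → g = 0) :
    Module.finrank K L ≤ Nat.card N := by
  have : Fintype N := Fintype.ofFinite N
  let restrict : L →ₗ[K] (N → K) := (LinearMap.funLeft K K ((↑) : N → V)).comp L.subtype
  have hinj : Injective restrict := by
    rw [← LinearMap.ker_eq_bot, LinearMap.ker_eq_bot']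
    rintro ⟨g, hg⟩ hzero
    exact Subtype.ext (hN g hg fun n hn => congrFun hzero ⟨n, hn⟩)
  simpa [Nat.card_eq_fintype_card] using LinearMap.finrank_le_finrank_of_injective hinj

theorem stmt_5 (F : Type) [Field F] [Fintype F] (m : ℕ)
    (Fam : Submodule F (F → F))
    (hinv : ∀ f ∈ Fam, ∀ a b : F, a ≠ 0 → (fun x => f (a * x + b)) ∈ Fam)
    (hproper : Fam ≠ ⊤)
    (L : Submodule F ((Fin m → F) → F))
    (hL : ∀ g : (Fin m → F) → F,
      g ∈ L ↔ ∀ x y : Fin m → F, y ≠ 0 → (fun t => g (x + t • y)) ∈ Fam)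
    (N : Set (Fin m → F))
    (hN : ∀ x : Fin m → F, ∃ y : Fin m → F, y ≠ 0 ∧ ∀ t : F, t ≠ 0 → x + t • y ∈ N) :
    Module.finrank F L ≤ Nat.card N := by
  have htrans : ∀ f ∈ Fam, ∀ b : F, (fun x => f (x + b)) ∈ Fam := fun f hf b => by
    simpa only [one_mul] using hinv f hf 1 b one_ne_zero
  exact L.finrank_le_natCard_of_eqOn_zero N fun g hg hgN =>
    eq_zero_of_eqOn_nikodym Fam htrans hproper ((hL g).mp hg) hN hgN
end

section
/- Let m ≥ 2 and let f : F_2^m → F_2 be a function with 0 < Pr_{x ∈ F_2^m}[f(x) ≠ 0] < δ for some δ > 1/2^{m-1}. Then there exists an (m-1)-dimensional affine subspace H ⊊ F_2^m such that 0 < Pr_{x ∈ H}[f(x) ≠ 0] < δ. -/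
/-!
Use coordinate hyperplanes `x i = c`. If the support `S` of `f` is a single point, any
coordinate hyperplane through it meets `S` in exactly that point, and `1 < δ 2^(m-1)`.
Otherwise two points of `S` differ in some coordinate `i`, so the hyperplanes `x i = 0` and
`x i = 1` split `S` into two nonempty pieces, the smaller of which has at most
`|S| / 2 < δ 2^(m-1)` points.
-/

open Finset

theorem Finset.exists_mem_two_mul_card_fiber_le {α β : Type*} [DecidableEq β] (S : Finset α)
    (g : α → β) {x y : α} (hx : x ∈ S) (hy : y ∈ S) (hxy : g x ≠ g y) :
    ∃ z ∈ S, 2 * #{w ∈ S | g w = g z} ≤ #S := by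
  have hsum : #{w ∈ S | g w = g x} + #{w ∈ S | g w = g y} ≤ #S := by
    rw [← card_filter_add_card_filter_not (fun w => g w = g x) (s := S)]
    refine add_le_add_right (card_le_card fun w => ?_) _
    simp only [mem_filter]
    exact fun ⟨hwS, hw⟩ => ⟨hwS, fun hwx => hxy (hwx.symm.trans hw)⟩
  by_cases hle : #{w ∈ S | g w = g x} ≤ #{w ∈ S | g w = g y}
  · exact ⟨x, hx, by omega⟩
  · exact ⟨y, hy, by omega⟩

theorem Finset.Nontrivial.exists_mem_two_mul_card_coord_fiber_le {ι β : Type*} [DecidableEq β]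
    {S : Finset (ι → β)} (hS : S.Nontrivial) :
    ∃ i, ∃ z ∈ S, 2 * #{w ∈ S | w i = z i} ≤ #S := by
  obtain ⟨x, hx, y, hy, hxy⟩ := hS
  obtain ⟨i, hi⟩ := Function.ne_iff.mp hxy
  exact ⟨i, S.exists_mem_two_mul_card_fiber_le (· i) hx hy hi⟩

theorem Finset.Nonempty.exists_mem_two_mul_card_coord_fiber_le_max {ι β : Type*} [Nonempty ι]
    [DecidableEq β] {S : Finset (ι → β)} (hS : S.Nonempty) :
    ∃ i, ∃ z ∈ S, 2 * #{w ∈ S | w i = z i} ≤ max 2 #S := by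
  obtain ⟨z, rfl⟩ | hnt := hS.exists_eq_singleton_or_nontrivial
  · obtain ⟨i⟩ := ‹Nonempty ι›
    have hle := card_filter_le {z} (fun w => w i = z i)
    rw [card_singleton] at hle
    exact ⟨i, z, mem_singleton_self z, le_max_of_le_left (by omega)⟩
  · obtain ⟨i, z, hz, hle⟩ := hnt.exists_mem_two_mul_card_coord_fiber_le
    exact ⟨i, z, hz, le_max_of_le_right hle⟩

theorem LinearMap.finrank_ker_proj {ι K : Type*} [Fintype ι] [DecidableEq ι] [Field K] (i : ι) :
    Module.finrank K (LinearMap.ker (LinearMap.proj i : (ι → K) →ₗ[K] K)) =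
      Fintype.card ι - 1 := by
  have hne : (LinearMap.proj i : (ι → K) →ₗ[K] K) ≠ 0 := fun h => by
    simpa using LinearMap.congr_fun h (Pi.single i 1)
  have := Module.Dual.finrank_ker_add_one_of_ne_zero hne
  rw [Module.finrank_fintype_fun_eq_card] at this
  omega

theorem stmt_6 (m : ℕ) (hm : 2 ≤ m) (f : (Fin m → ZMod 2) → ZMod 2) (δ : ℚ)
    (hδ : 1 / 2 ^ (m - 1) < δ)
    (hlo : 0 < (Nat.card {x : Fin m → ZMod 2 | f x ≠ 0} : ℚ) / 2 ^ m)
    (hhi : (Nat.card {x : Fin m → ZMod 2 | f x ≠ 0} : ℚ) / 2 ^ m < δ) :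
    ∃ (W : Submodule (ZMod 2) (Fin m → ZMod 2)) (a : Fin m → ZMod 2),
      Module.finrank (ZMod 2) W = m - 1 ∧
      0 < (Nat.card {x : Fin m → ZMod 2 | x - a ∈ W ∧ f x ≠ 0} : ℚ) / 2 ^ (m - 1) ∧
      (Nat.card {x : Fin m → ZMod 2 | x - a ∈ W ∧ f x ≠ 0} : ℚ) / 2 ^ (m - 1) < δ := by
  classical
  set S : Finset (Fin m → ZMod 2) := {x | f x ≠ 0}
  have hS : Nat.card {x : Fin m → ZMod 2 | f x ≠ 0} = #S := by
    rw [Nat.card_eq_fintype_card, Fintype.card_subtype]; rfl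
  have hSne : S.Nonempty := by
    rw [hS, div_pos_iff_of_pos_right (by positivity)] at hlo
    exact card_pos.mp (by exact_mod_cast hlo)
  have : Nonempty (Fin m) := ⟨⟨0, by omega⟩⟩
  obtain ⟨i, z, hz, hle⟩ := hSne.exists_mem_two_mul_card_coord_fiber_le_max
  have hfiber : Nat.card {x | x - z ∈ LinearMap.ker (LinearMap.proj (R := ZMod 2) i) ∧ f x ≠ 0} =
      #{w ∈ S | w i = z i} := by
    rw [Nat.card_eq_fintype_card, Fintype.card_subtype, filter_filter]
    simp [sub_eq_zero, and_comm]
  have hpos : 0 < #{w ∈ S | w i = z i} := card_pos.mpr ⟨z, mem_filter.mpr ⟨hz, rfl⟩⟩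
  have hpow : (2 : ℚ) ^ m = 2 * 2 ^ (m - 1) := by rw [← pow_succ']; congr 1; omega
  refine ⟨LinearMap.ker (LinearMap.proj i), z, by simp [LinearMap.finrank_ker_proj], ?_, ?_⟩
  · rw [hfiber]; positivity
  · rw [hS, hpow, div_lt_iff₀ (by positivity)] at hhi
    rw [div_lt_iff₀ (by positivity)] at hδ
    have hmax : max 2 (#S : ℚ) < 2 * (δ * 2 ^ (m - 1)) := max_lt (by linarith) (by linarith)
    have hle' : (2 * #{w ∈ S | w i = z i} : ℚ) ≤ max 2 (#S : ℚ) := by exact_mod_cast hle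
    rw [hfiber, div_lt_iff₀ (by positivity)]
    linarith
end

section
/- Let m ≥ 2 and let f : F_3^m → F_3 be a nonzero function with δ(f,0) ≥ 1/3^{m-1}, where δ(f,0) is the fraction of points where f is nonzero. Then there exists an (m-1)-dimensional affine subspace H ⊂ F_3^m such that 0 < δ(f|_H, 0) ≤ δ(f,0). -/
/-! The bound `δ(f, 0) ≥ 3^(1-m)` says that the support of `f` has at least three points, and
three distinct points can be told apart by a linear form `φ` over `𝔽₃`, so every fibre `φ⁻¹(c)`
meets the support. The smallest of these three slices holds at most a third of the support; as a
hyperplane holds a third of the points of `𝔽₃ᵐ`, its relative density is at most `δ(f, 0)`. -/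

open Finset Module

theorem Module.exists_dual_apply_eq_one_apply_eq_zero {K V : Type*} [Field K] [AddCommGroup V]
    [Module K V] {u v : V} (h : u ∉ K ∙ v) : ∃ φ : Dual K V, φ u = 1 ∧ φ v = 0 := by
  obtain ⟨φ, hφu, hφv⟩ := Submodule.exists_dual_map_eq_bot_of_notMem h inferInstance
  refine ⟨(φ u)⁻¹ • φ, inv_mul_cancel₀ hφu, ?_⟩
  have : φ v ∈ (K ∙ v).map φ := Submodule.mem_map_of_mem (Submodule.mem_span_singleton_self v)
  rw [hφv, Submodule.mem_bot] at this
  simp [this]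

theorem Module.exists_dual_apply_eq_one_apply_ne {K V : Type*} [Field K] [AddCommGroup V]
    [Module K V] (hK : (2 : K) ≠ 0) {u v : V} (hu : u ≠ 0) (hv : v ≠ 0) (huv : u ≠ v) :
    ∃ φ : Dual K V, φ u = 1 ∧ φ v ≠ 0 ∧ φ v ≠ 1 := by
  by_cases hvu : v ∈ K ∙ u
  · obtain ⟨c, rfl⟩ := Submodule.mem_span_singleton.mp hvu
    obtain ⟨φ, hφu, -⟩ :=
      exists_dual_apply_eq_one_apply_eq_zero (K := K) (u := u) (v := 0) (by simpa)
    refine ⟨φ, hφu, ?_, ?_⟩ <;> simp only [map_smul, hφu, smul_eq_mul, mul_one]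
    · rintro rfl; simp at hv
    · rintro rfl; simp at huv
  · have huv' : u ∉ K ∙ v := fun h => hvu <| by
      obtain ⟨c, rfl⟩ := Submodule.mem_span_singleton.mp h
      have hc : c ≠ 0 := by rintro rfl; simp at hu
      exact Submodule.mem_span_singleton.mpr
        ⟨c⁻¹, by rw [smul_smul, inv_mul_cancel₀ hc, one_smul]⟩
    obtain ⟨φ, hφu, hφv⟩ := exists_dual_apply_eq_one_apply_eq_zero huv'
    obtain ⟨ψ, hψv, hψu⟩ := exists_dual_apply_eq_one_apply_eq_zero hvu
    refine ⟨φ - ψ, by simp [hφu, hψu], ?_, ?_⟩ <;> simp only [LinearMap.sub_apply, hφv, hψv]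
    · simp
    · intro h; apply hK; linear_combination -h

theorem ZMod.exists_dual_surjOn_of_three_le_card {V : Type*} [AddCommGroup V]
    [Module (ZMod 3) V] {s : Finset V} (hs : 3 ≤ #s) :
    ∃ φ : Dual (ZMod 3) V, Set.SurjOn φ s Set.univ := by
  obtain ⟨x, hx, y, hy, z, hz, hxy, hxz, hyz⟩ := two_lt_card.mp hs
  obtain ⟨φ, hφy, hφz₀, hφz₁⟩ := Module.exists_dual_apply_eq_one_apply_ne (K := ZMod 3)
    (by decide) (sub_ne_zero.mpr hxy.symm) (sub_ne_zero.mpr hxz.symm)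
    (fun h => hyz (sub_left_injective h))
  refine ⟨φ, fun c _ => ?_⟩
  have hvalues : ∀ d e : ZMod 3, d ≠ 0 → d ≠ 1 → e = 0 ∨ e = 1 ∨ e = d := by decide
  rcases hvalues _ (c - φ x) hφz₀ hφz₁ with h | h | h <;> simp only [map_sub] at hφy h
  · exact ⟨x, hx, by linear_combination -h⟩
  · exact ⟨y, hy, by linear_combination hφy - h⟩
  · exact ⟨z, hz, by linear_combination -h⟩

open scoped Classical in
theorem ZMod.exists_hyperplane_coset_three_mul_card_le {V : Type*} [AddCommGroup V]
    [Module (ZMod 3) V] [FiniteDimensional (ZMod 3) V] {s : Finset V} (hs : 3 ≤ #s) :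
    ∃ W : Submodule (ZMod 3) V, finrank (ZMod 3) W + 1 = finrank (ZMod 3) V ∧
      ∃ a ∈ s, 3 * #{x ∈ s | x - a ∈ W} ≤ #s := by
  obtain ⟨φ, hφ⟩ := exists_dual_surjOn_of_three_le_card hs
  have hφ0 : φ ≠ 0 := by
    rintro rfl
    obtain ⟨w, -, hw⟩ := hφ (Set.mem_univ 1)
    simp at hw
  obtain ⟨c, -, hc⟩ := exists_card_fiber_le_of_card_le_nsmul (s := s) (f := φ) univ_nonempty
    (b := (#s : ℚ) / 3) (by simp [ZMod.card, mul_div_cancel₀])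
  obtain ⟨a, ha, rfl⟩ := hφ (Set.mem_univ c)
  refine ⟨LinearMap.ker φ, Dual.finrank_ker_add_one_of_ne_zero hφ0, a, ha, ?_⟩
  simp only [LinearMap.mem_ker, map_sub, sub_eq_zero]
  exact_mod_cast (le_div_iff₀' three_pos).mp hc

theorem stmt_7_general (m : ℕ) (hm : 2 ≤ m) (f : (Fin m → ZMod 3) → ZMod 3)
    (hδ : (1 : ℚ) / 3 ^ (m - 1) ≤ (Nat.card {x : Fin m → ZMod 3 | f x ≠ 0} : ℚ) / 3 ^ m) :
    ∃ (W : Submodule (ZMod 3) (Fin m → ZMod 3)) (a : Fin m → ZMod 3),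
      Module.finrank (ZMod 3) W = m - 1 ∧
      0 < (Nat.card {x : Fin m → ZMod 3 | x - a ∈ W ∧ f x ≠ 0} : ℚ) / 3 ^ (m - 1) ∧
      (Nat.card {x : Fin m → ZMod 3 | x - a ∈ W ∧ f x ≠ 0} : ℚ) / 3 ^ (m - 1)
        ≤ (Nat.card {x : Fin m → ZMod 3 | f x ≠ 0} : ℚ) / 3 ^ m := by
  classical
  set T : Finset (Fin m → ZMod 3) := {x | f x ≠ 0}
  have hT : Nat.card {x : Fin m → ZMod 3 | f x ≠ 0} = #T := by
    rw [Nat.card_eq_card_toFinset, Set.toFinset_ofPred]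
  have h3m : (3 : ℚ) ^ m = 3 * 3 ^ (m - 1) := by rw [← pow_succ', Nat.sub_add_cancel (by omega)]
  have hpos : (0 : ℚ) < 3 ^ (m - 1) := by positivity
  have hT3 : 3 ≤ #T := by
    rw [hT, h3m, div_le_div_iff₀ hpos (by positivity)] at hδ
    exact_mod_cast (le_of_mul_le_mul_right (by linarith) hpos : (3 : ℚ) ≤ #T)
  obtain ⟨W, hW, a, ha, hWa⟩ := ZMod.exists_hyperplane_coset_three_mul_card_le hT3
  have hcard : Nat.card {x : Fin m → ZMod 3 | x - a ∈ W ∧ f x ≠ 0} = #{x ∈ T | x - a ∈ W} := by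
    rw [Nat.card_eq_card_toFinset, Set.toFinset_ofPred, filter_filter]
    simp only [and_comm]
  refine ⟨W, a, by rw [finrank_fin_fun] at hW; omega, ?_, ?_⟩
  · rw [hcard]
    exact div_pos (by exact_mod_cast card_pos.mpr ⟨a, mem_filter.mpr ⟨ha, by simp⟩⟩) hpos
  · rw [hcard, hT, h3m, div_le_div_iff₀ hpos (by positivity)]
    have : (3 * #{x ∈ T | x - a ∈ W} : ℚ) ≤ #T := by exact_mod_cast hWa
    nlinarith

theorem stmt_7 (m : ℕ) (hm : 2 ≤ m) (f : (Fin m → ZMod 3) → ZMod 3)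
    (hf : f ≠ 0)
    (hδ : (1 : ℚ) / 3 ^ (m - 1) ≤ (Nat.card {x : Fin m → ZMod 3 | f x ≠ 0} : ℚ) / 3 ^ m) :
    ∃ (W : Submodule (ZMod 3) (Fin m → ZMod 3)) (a : Fin m → ZMod 3),
      Module.finrank (ZMod 3) W = m - 1 ∧
      0 < (Nat.card {x : Fin m → ZMod 3 | x - a ∈ W ∧ f x ≠ 0} : ℚ) / 3 ^ (m - 1) ∧
      (Nat.card {x : Fin m → ZMod 3 | x - a ∈ W ∧ f x ≠ 0} : ℚ) / 3 ^ (m - 1)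
        ≤ (Nat.card {x : Fin m → ZMod 3 | f x ≠ 0} : ℚ) / 3 ^ m :=
  stmt_7_general m hm f hδ
end

section
/- Let F ⊆ {F_2^t → F_2} be a linear affine-invariant code with minimum distance δ(F) > 1/2^t. Then for every m ≥ t, the lifted code Lift_m(F) = {f : F_2^m → F_2 | f|_V ∈ F for every t-dimensional affine subspace V} has minimum distance at least δ(F). -/
/-!
Induction on `m`. Restricted to either of the parallel hyperplanes `{x_i = 0}`, `{x_i = 1}`
of `𝔽₂^(m+1)`, a lifted codeword `g` is again a lifted codeword, so each nonzero restriction has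
at least `δ 2^m` support points. Both restrictions are nonzero for a suitable `i`: since
`δ 2^t > 1`, the restriction bound already gives `g` two support points, and these differ in some
coordinate `i`.
-/

open Finset Function

namespace Fin

variable {m : ℕ}

section AffineMap

variable {K : Type*} [Ring K]

def insertNthAffineMap (i : Fin (m + 1)) (c : K) : (Fin m → K) →ᵃ[K] (Fin (m + 1) → K) where
  toFun := insertNth (α := fun _ ↦ K) i c
  linear :=
    { toFun := insertNth (α := fun _ ↦ K) i 0
      map_add' p q := by rw [← insertNth_add, add_zero]
      map_smul' r p := by ext j; cases j using i.succAboveCases <;> simp }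
  map_vadd' p v := by simp [← insertNth_add]

theorem insertNthAffineMap_injective (i : Fin (m + 1)) (c : K) :
    Injective (insertNthAffineMap i c) :=
  insertNth_right_injective (α := fun _ ↦ K) c

end AffineMap

variable {α : Type*}

theorem comp_insertNth_ne_zero {β : Type*} [Zero β] {g : (Fin (m + 1) → α) → β}
    {x : Fin (m + 1) → α} (hx : g x ≠ 0) (i : Fin (m + 1)) :
    g ∘ insertNth (α := fun _ ↦ α) i (x i) ≠ 0 :=
  fun h ↦ hx (by simpa using congrFun h (i.removeNth x))

theorem card_filter_eq_sum_card_filter_insertNth [Fintype α]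
    (P : (Fin (m + 1) → α) → Prop) [DecidablePred P] (i : Fin (m + 1)) :
    #{x | P x} = ∑ c, #{y | P (insertNth (α := fun _ ↦ α) i c y)} := by
  simp only [card_filter]
  rw [← Fintype.sum_equiv (insertNthEquiv (fun _ ↦ α) i)
    (fun p ↦ if P (i.insertNth p.1 p.2) then 1 else 0) _ (fun _ ↦ rfl), Fintype.sum_prod_type]

end Fin

section LiftCode

variable {K : Type*} [Ring K] {t : ℕ}

def liftCode (F : Set ((Fin t → K) → K)) (m : ℕ) : Set ((Fin m → K) → K) :=
  {g | ∀ A : (Fin t → K) →ᵃ[K] (Fin m → K), Injective A → g ∘ A ∈ F}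

variable {F : Set ((Fin t → K) → K)}

theorem mem_of_mem_liftCode_self {g : (Fin t → K) → K} (hg : g ∈ liftCode F t) : g ∈ F :=
  hg (AffineMap.id K _) injective_id

theorem comp_mem_liftCode {m : ℕ} {g : (Fin m → K) → K} (hg : g ∈ liftCode F m) {n : ℕ}
    {B : (Fin n → K) →ᵃ[K] (Fin m → K)} (hB : Injective B) : g ∘ B ∈ liftCode F n :=
  fun A hA ↦ hg (B.comp A) (hB.comp hA)

end LiftCode

theorem two_mul_le_card_support_of_slices {m : ℕ} {g : (Fin (m + 1) → ZMod 2) → ZMod 2}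
    (hg : g ≠ 0) {b : ℚ} (hb : 1 < b)
    (hslice : ∀ i c, g ∘ Fin.insertNth (α := fun _ ↦ ZMod 2) i c ≠ 0 →
      b ≤ #{y | g (Fin.insertNth (α := fun _ ↦ ZMod 2) i c y) ≠ 0}) :
    2 * b ≤ #{x | g x ≠ 0} := by
  obtain ⟨x, hx⟩ := ne_iff.mp hg
  have hcard : ∀ i,
      #{x | g x ≠ 0} = ∑ c, #{y | g (Fin.insertNth (α := fun _ ↦ ZMod 2) i c y) ≠ 0} :=
    Fin.card_filter_eq_sum_card_filter_insertNth _
  have hsupp : 1 < #{x | g x ≠ 0} := by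
    have hle := (single_le_sum (fun c _ ↦ Nat.zero_le _) (mem_univ (x 0))).trans_eq (hcard 0).symm
    have hb_le : b ≤ (#{x | g x ≠ 0} : ℚ) :=
      (hslice 0 (x 0) (Fin.comp_insertNth_ne_zero hx 0)).trans (by exact_mod_cast hle)
    exact_mod_cast hb.trans_le hb_le
  obtain ⟨p, hp, q, hq, hpq⟩ := one_lt_card.mp hsupp
  obtain ⟨i, hi⟩ := ne_iff.mp hpq
  have hslices : ∀ c, b ≤ #{y | g (Fin.insertNth (α := fun _ ↦ ZMod 2) i c y) ≠ 0} := by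
    intro c
    have hcases : ∀ u v w : ZMod 2, u ≠ v → w = u ∨ w = v := by decide
    obtain rfl | rfl := hcases (p i) (q i) c hi
    · exact hslice i _ (Fin.comp_insertNth_ne_zero (mem_filter.mp hp).2 i)
    · exact hslice i _ (Fin.comp_insertNth_ne_zero (mem_filter.mp hq).2 i)
  calc 2 * b = ∑ _ : ZMod 2, b := by simp [two_mul]
    _ ≤ ∑ c, (#{y | g (Fin.insertNth (α := fun _ ↦ ZMod 2) i c y) ≠ 0} : ℚ) :=
      sum_le_sum fun c _ ↦ hslices c
    _ = #{x | g x ≠ 0} := by rw [hcard i]; push_cast; rfl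

theorem mul_two_pow_le_card_support_of_mem_liftCode {t : ℕ}
    {F : Set ((Fin t → ZMod 2) → ZMod 2)} {δ : ℚ} (hδ : 1 < δ * 2 ^ t)
    (hF : ∀ f ∈ F, f ≠ 0 → δ * 2 ^ t ≤ #{x | f x ≠ 0}) {m : ℕ} (htm : t ≤ m)
    {g : (Fin m → ZMod 2) → ZMod 2} (hg : g ∈ liftCode F m) (hg0 : g ≠ 0) :
    δ * 2 ^ m ≤ #{x | g x ≠ 0} := by
  induction m, htm using Nat.le_induction with
  | base => exact hF g (mem_of_mem_liftCode_self hg) hg0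
  | succ m htm ih =>
    have hδ0 : 0 < δ := pos_of_mul_pos_left (zero_lt_one.trans hδ) (by positivity)
    have hδm : 1 < δ * 2 ^ m := hδ.trans_le <| by gcongr; norm_num
    calc δ * 2 ^ (m + 1) = 2 * (δ * 2 ^ m) := by ring
      _ ≤ #{x | g x ≠ 0} := two_mul_le_card_support_of_slices hg0 hδm fun i c hc ↦
        ih (comp_mem_liftCode hg (Fin.insertNthAffineMap_injective i c)) hc

theorem stmt_8_general (t m : ℕ) (htm : t ≤ m)
    (Fam : Submodule (ZMod 2) ((Fin t → ZMod 2) → ZMod 2))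
    (δ : ℚ) (hδ : 1 / 2 ^ t < δ)
    (hdist : ∀ f ∈ Fam, f ≠ 0 →
      δ ≤ (Nat.card {x : Fin t → ZMod 2 | f x ≠ 0} : ℚ) / 2 ^ t)
    (g : (Fin m → ZMod 2) → ZMod 2)
    (hg : ∀ A : (Fin t → ZMod 2) →ᵃ[ZMod 2] (Fin m → ZMod 2),
      Function.Injective A → g ∘ A ∈ Fam)
    (hgne : g ≠ 0) :
    δ ≤ (Nat.card {x : Fin m → ZMod 2 | g x ≠ 0} : ℚ) / 2 ^ m := by
  have hcard : ∀ {n : ℕ} (f : (Fin n → ZMod 2) → ZMod 2),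
      Nat.card {x | f x ≠ 0} = #{x | f x ≠ 0} := fun f ↦ by
    rw [Nat.card_eq_fintype_card, Fintype.card_subtype]; rfl
  simp only [hcard, le_div_iff₀ (by positivity : (0 : ℚ) < 2 ^ _)] at hdist ⊢
  rw [div_lt_iff₀ (by positivity)] at hδ
  exact mul_two_pow_le_card_support_of_mem_liftCode hδ hdist htm hg hgne

theorem stmt_8 (t m : ℕ) (htm : t ≤ m)
    (Fam : Submodule (ZMod 2) ((Fin t → ZMod 2) → ZMod 2))
    (hinv : ∀ f ∈ Fam, ∀ A : (Fin t → ZMod 2) →ᵃ[ZMod 2] (Fin t → ZMod 2),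
      Function.Bijective A → f ∘ A ∈ Fam)
    (δ : ℚ) (hδ : 1 / 2 ^ t < δ)
    (hdist : ∀ f ∈ Fam, f ≠ 0 →
      δ ≤ (Nat.card {x : Fin t → ZMod 2 | f x ≠ 0} : ℚ) / 2 ^ t)
    (g : (Fin m → ZMod 2) → ZMod 2)
    (hg : ∀ A : (Fin t → ZMod 2) →ᵃ[ZMod 2] (Fin m → ZMod 2),
      Function.Injective A → g ∘ A ∈ Fam)
    (hgne : g ≠ 0) :
    δ ≤ (Nat.card {x : Fin m → ZMod 2 | g x ≠ 0} : ℚ) / 2 ^ m :=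
  stmt_8_general t m htm Fam δ hδ hdist g hg hgne
end

section
/- Let Q = 2^ℓ with k = Q, and let D = {0,1,...,Q-2}. For every subset S ⊆ [m] with |S| ≤ Q-2, the 0/1 indicator vector d_S ∈ {0,1}^m (which is 1 on coordinates in S and 0 elsewhere) belongs to Lift_m(D) = {d ∈ {0,...,Q-1}^m : for all e ≤_2 d, (Σ_i e_i) mod* Q ≠ Q-1}. Consequently |Lift_m(D)| ≥ C(m, Q-2). -/
/-- The `i`-th base-`p` digit of `n`. -/
def digit (p n i : ℕ) : ℕ := (Nat.digits p n).getD i 0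

/-- `a ≤_p b`: every base-`p` digit of `a` is at most the corresponding digit of `b`. -/
def pShadow (p a b : ℕ) : Prop := ∀ i, digit p a i ≤ digit p b i

/-- `a mod* Q`: maps `0` to `0` and nonzero `a` to its representative in `{1,…,Q-1}`
modulo `Q - 1`. -/
def modStar (Q a : ℕ) : ℕ := if a = 0 then 0 else (a - 1) % (Q - 1) + 1

/-!
A digitwise-dominated number is dominated, so every `e ≤₂ d` has `∑ e ≤ ∑ d`. When
`∑ d < Q - 1`, the reduction `mod* Q` leaves `∑ e` unchanged, so it never reaches `Q - 1`.
An indicator vector of a set of size at most `Q - 2` is such a `d`, and distinct sets give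
distinct indicator vectors, which yields the `C(m, Q - 2)` lower bound.
-/

section Digits

variable {p : ℕ}

theorem digit_eq_div_pow_mod (hp : 2 ≤ p) (n i : ℕ) : digit p n i = n / p ^ i % p :=
  Nat.getD_digits n i hp

theorem digit_zero (hp : 2 ≤ p) (n : ℕ) : digit p n 0 = n % p := by
  simp [digit_eq_div_pow_mod hp]

theorem digit_succ (hp : 2 ≤ p) (n i : ℕ) : digit p n (i + 1) = digit p (n / p) i := by
  rw [digit_eq_div_pow_mod hp, digit_eq_div_pow_mod hp, pow_succ', Nat.div_div_eq_div_mul]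

theorem pShadow.div (hp : 2 ≤ p) {a b : ℕ} (h : pShadow p a b) : pShadow p (a / p) (b / p) :=
  fun i => by simpa only [digit_succ hp] using h (i + 1)

theorem pShadow.le (hp : 2 ≤ p) {a b : ℕ} (h : pShadow p a b) : a ≤ b := by
  induction a using Nat.strong_induction_on generalizing b with
  | _ a ih =>
    rcases Nat.eq_zero_or_pos a with rfl | ha
    · exact Nat.zero_le b
    have hdiv : a / p ≤ b / p := ih (a / p) (Nat.div_lt_self ha (by omega)) (h.div hp)
    have hmod : a % p ≤ b % p := by simpa only [digit_zero hp] using h 0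
    calc a = a % p + p * (a / p) := (Nat.mod_add_div a p).symm
      _ ≤ b % p + p * (b / p) := by gcongr
      _ = b := Nat.mod_add_div b p

end Digits

theorem modStar_eq_self {Q a : ℕ} (h : a < Q) : modStar Q a = a := by
  unfold modStar
  split_ifs with ha
  · exact ha.symm
  · rw [Nat.mod_eq_of_lt (by omega)]
    omega

section Lift

variable {ι : Type*}

/-- Membership in `Lift(D)` for `D = {0, …, Q - 2}`, apart from the range condition `d i ≤ Q - 1`. -/
def IsLiftAdmissible [Fintype ι] (Q : ℕ) (d : ι → ℕ) : Prop :=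
  ∀ e : ι → ℕ, (∀ i, pShadow 2 (e i) (d i)) → modStar Q (∑ i, e i) ≠ Q - 1

theorem isLiftAdmissible_of_sum_lt [Fintype ι] {Q : ℕ} {d : ι → ℕ} (hd : ∑ i, d i < Q - 1) :
    IsLiftAdmissible Q d := by
  intro e he
  have hsum : ∑ i, e i ≤ ∑ i, d i :=
    Finset.sum_le_sum fun i _ => (he i).le le_rfl
  rw [modStar_eq_self (by omega)]
  omega

variable [DecidableEq ι]

def indicatorVec (S : Finset ι) : ι → ℕ := fun i => if i ∈ S then 1 else 0

theorem indicatorVec_le_one (S : Finset ι) (i : ι) : indicatorVec S i ≤ 1 := by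
  unfold indicatorVec
  split_ifs <;> omega

theorem indicatorVec_injective : Function.Injective (indicatorVec (ι := ι)) := by
  intro S T h
  ext i
  have hi := congrFun h i
  unfold indicatorVec at hi
  split_ifs at hi <;> simp_all

variable [Fintype ι]

theorem sum_indicatorVec (S : Finset ι) : ∑ i, indicatorVec S i = S.card := by
  simp [indicatorVec]

theorem isLiftAdmissible_indicatorVec {Q : ℕ} (hQ : 2 ≤ Q) {S : Finset ι} (hS : S.card ≤ Q - 2) :
    IsLiftAdmissible Q (indicatorVec S) :=
  isLiftAdmissible_of_sum_lt (by rw [sum_indicatorVec]; omega)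

theorem choose_le_ncard_lift {Q : ℕ} (hQ : 2 ≤ Q) :
    (Fintype.card ι).choose (Q - 2) ≤
      {d : ι → ℕ | (∀ i, d i ≤ Q - 1) ∧ IsLiftAdmissible Q d}.ncard := by
  have hfinite : {d : ι → ℕ | (∀ i, d i ≤ Q - 1) ∧ IsLiftAdmissible Q d}.Finite :=
    (Set.finite_Iic fun _ => Q - 1).subset fun d hd => hd.1
  rw [← Finset.card_univ, ← Finset.card_powersetCard, ← Set.ncard_coe_finset]
  refine Set.ncard_le_ncard_of_injOn indicatorVec (fun S hS => ?_)
    indicatorVec_injective.injOn hfinite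
  have hcard : S.card = Q - 2 := Finset.mem_powersetCard_univ.mp hS
  exact ⟨fun i => (indicatorVec_le_one S i).trans (by omega),
    isLiftAdmissible_indicatorVec hQ hcard.le⟩

end Lift

theorem stmt_11 (ℓ m Q : ℕ) (hℓ : 1 ≤ ℓ) (hQ : Q = 2 ^ ℓ)
    (S : Finset (Fin m)) (hS : S.card ≤ Q - 2) :
    (∀ e : Fin m → ℕ, (∀ i, pShadow 2 (e i) (if i ∈ S then 1 else 0)) →
      modStar Q (∑ i, e i) ≠ Q - 1) ∧
    Nat.choose m (Q - 2) ≤ Nat.card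
      {d : Fin m → ℕ | (∀ i, d i ≤ Q - 1) ∧
        ∀ e : Fin m → ℕ, (∀ i, pShadow 2 (e i) (d i)) →
          modStar Q (∑ i, e i) ≠ Q - 1} := by
  have hQ2 : 2 ≤ Q := hQ ▸ Nat.le_self_pow (by omega) 2
  refine ⟨isLiftAdmissible_indicatorVec hQ2 hS, ?_⟩
  have hcard := choose_le_ncard_lift (ι := Fin m) hQ2
  rwa [Fintype.card_fin, ← Nat.card_coe_set_eq] at hcard
end

section
/- Let F ⊆ {F_Q^t → F_q} be a proper linear affine-invariant code. Then the m-dimensional lift L = Lift_m(F) is a (Q^t - 1, Q^{-t}/3)-locally correctable code: there is a randomized algorithm that, given oracle access to f that is (Q^{-t}/3)-close to some codeword p ∈ L and given a ∈ F_Q^m, makes at most Q^t - 1 queries and outputs p(a) with probability at least 2/3. The algorithm picks a random t-dimensional affine subspace A through a, reads f on A \ {a}, and uses the unique codeword of F consistent with those values (uniqueness holds since δ(F) ≥ 2Q^{-t}). -/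
/-!
For a uniformly random linearly independent frame `b` and a fixed nonzero `u`, the point
`∑ i, u i • b i` is uniformly distributed over the nonzero vectors, because the general linear
group acts transitively on them and permutes frames. A union bound over the `|K| ^ t - 1` nonzero
`u` then shows that at most a third of the frames see a point of the error set `{f ≠ p}` on the
punctured subspace `a + span b`. On every other frame `f` agrees there with the codeword
`p ∘ A` of the base code, and two codewords of a proper translation-invariant code that agree
off one point agree everywhere, so the decoder returns `p a`.
-/

open Finset

theorem Submodule.apply_eq_of_forall_ne_apply_eq {V k : Type*} [AddGroup V] [Finite V]
    [DivisionRing k] {C : Submodule k (V → k)} (hC : C ≠ ⊤)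
    (htrans : ∀ g ∈ C, ∀ v : V, (fun x => g (v + x)) ∈ C)
    {g h : V → k} (hg : g ∈ C) (hh : h ∈ C) {x₀ : V} (hgh : ∀ x ≠ x₀, g x = h x) :
    g x₀ = h x₀ := by
  classical
  have := Fintype.ofFinite V
  by_contra hne
  set d := g - h
  have hd : d ∈ C := C.sub_mem hg hh
  have hd₀ : d x₀ ≠ 0 := sub_ne_zero.mpr hne
  -- Rescaled translates of `d` are the point indicators, which span `V → k`.
  have hsingle : ∀ w : V, (fun x => if w = x then (1 : k) else 0) ∈ C := by
    intro w
    convert C.smul_mem (d x₀)⁻¹ (htrans d hd (x₀ - w)) using 1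
    funext x
    by_cases hx : w = x
    · simp [hx, hd₀]
    · have : x₀ - w + x ≠ x₀ := by
        rwa [Ne, sub_eq_add_neg, add_assoc, add_eq_left, neg_add_eq_zero]
      simp [hx, d, hgh _ this]
  exact hC (C.eq_top_iff'.mpr fun q => (pi_eq_sum_univ q).symm ▸
    C.sum_mem fun w _ => C.smul_mem _ (hsingle w))

theorem exists_linearEquiv_apply_eq {K M : Type*} [Field K] [AddCommGroup M] [Module K M]
    {v w : M} (hv : v ≠ 0) (hw : w ≠ 0) :
    ∃ g : M ≃ₗ[K] M, g v = w := by
  obtain ⟨g, hg⟩ := Submodule.exists_linearEquiv_restrict_eq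
    ((LinearEquiv.toSpanNonzeroSingleton K M v hv).symm ≪≫ₗ
      LinearEquiv.toSpanNonzeroSingleton K M w hw)
  refine ⟨g, ?_⟩
  rw [← hg ⟨v, Submodule.mem_span_singleton_self v⟩, LinearEquiv.trans_apply,
    ← LinearEquiv.toSpanNonzeroSingleton_one K M v hv, LinearEquiv.symm_apply_apply,
    LinearEquiv.toSpanNonzeroSingleton_one]

section Frames

open scoped Classical

variable {K M ι : Type*} [Field K] [AddCommGroup M] [Module K M] [Fintype M]
  [Fintype ι] [DecidableEq ι]

theorem card_linearIndependent_sum_smul_eq_eq_of_ne_zero (u : ι → K) {v w : M} (hv : v ≠ 0)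
    (hw : w ≠ 0) :
    #{b : ι → M | LinearIndependent K b ∧ ∑ i, u i • b i = v} =
      #{b : ι → M | LinearIndependent K b ∧ ∑ i, u i • b i = w} := by
  obtain ⟨g, hg⟩ := exists_linearEquiv_apply_eq (K := K) hv hw
  refine card_equiv (Equiv.piCongrRight fun _ => g.toEquiv) fun b => ?_
  simp only [mem_filter, mem_univ, true_and]
  change _ ↔ LinearIndependent K (g.toLinearMap ∘ b) ∧ ∑ i, u i • g (b i) = w
  have hsum : ∑ i, u i • g (b i) = g (∑ i, u i • b i) := by simp only [map_sum, map_smul]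
  rw [g.toLinearMap.linearIndependent_iff g.ker, ← hg, hsum, g.injective.eq_iff]

theorem card_linearIndependent_sum_smul_eq_mul_le {u : ι → K} (hu : u ≠ 0) (v : M) :
    #{b : ι → M | LinearIndependent K b ∧ ∑ i, u i • b i = v} * (Fintype.card M - 1) ≤
      #{b : ι → M | LinearIndependent K b} := by
  by_cases hv : v = 0
  · have hempty : ({b : ι → M | LinearIndependent K b ∧ ∑ i, u i • b i = v} : Finset _) = ∅ :=
      filter_eq_empty_iff.mpr fun b _ ⟨hb, hsum⟩ =>
        hu (funext (Fintype.linearIndependent_iff.mp hb u (hsum.trans hv)))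
    rw [hempty, card_empty, zero_mul]; exact Nat.zero_le _
  calc #{b : ι → M | LinearIndependent K b ∧ ∑ i, u i • b i = v} * (Fintype.card M - 1)
      = ∑ w ∈ univ.erase 0, #{b : ι → M | LinearIndependent K b ∧ ∑ i, u i • b i = w} := by
        rw [sum_congr rfl fun w hw => card_linearIndependent_sum_smul_eq_eq_of_ne_zero u
          (ne_of_mem_erase hw) hv, sum_const, card_erase_of_mem (mem_univ _), card_univ,
          smul_eq_mul, mul_comm]
    _ ≤ ∑ w, #{b : ι → M | LinearIndependent K b ∧ ∑ i, u i • b i = w} :=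
        sum_le_sum_of_subset (erase_subset _ _)
    _ = #{b : ι → M | LinearIndependent K b} := by
        simp_rw [← filter_filter]
        exact (card_eq_sum_card_fiberwise fun _ _ => mem_univ _).symm

theorem card_linearIndependent_add_sum_smul_mem_mul_le {u : ι → K} (hu : u ≠ 0) (a : M)
    (E : Finset M) :
    #{b : ι → M | LinearIndependent K b ∧ a + ∑ i, u i • b i ∈ E} * (Fintype.card M - 1) ≤
      #E * #{b : ι → M | LinearIndependent K b} := by
  have hsub : ({b : ι → M | LinearIndependent K b ∧ a + ∑ i, u i • b i ∈ E} : Finset _) ⊆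
      E.biUnion fun x => {b | LinearIndependent K b ∧ ∑ i, u i • b i = x - a} := by
    intro b hb
    simp only [mem_filter, mem_univ, true_and] at hb
    exact mem_biUnion.mpr ⟨_, hb.2, by simp [hb.1]⟩
  calc _ ≤ (∑ x ∈ E, #{b : ι → M | LinearIndependent K b ∧ ∑ i, u i • b i = x - a}) *
        (Fintype.card M - 1) := Nat.mul_le_mul_right _ ((card_le_card hsub).trans card_biUnion_le)
    _ ≤ ∑ _x ∈ E, #{b : ι → M | LinearIndependent K b} := by
        rw [sum_mul]
        exact sum_le_sum fun x _ => card_linearIndependent_sum_smul_eq_mul_le hu (x - a)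
    _ = _ := by rw [sum_const, smul_eq_mul]

theorem card_linearIndependent_exists_add_sum_smul_mem_mul_le [Fintype K] (a : M)
    (E : Finset M) :
    #{b : ι → M | LinearIndependent K b ∧ ∃ u : ι → K, u ≠ 0 ∧ a + ∑ i, u i • b i ∈ E} *
        (Fintype.card M - 1) ≤
      (Fintype.card K ^ Fintype.card ι - 1) * (#E * #{b : ι → M | LinearIndependent K b}) := by
  have hsub : ({b | LinearIndependent K b ∧ ∃ u : ι → K, u ≠ 0 ∧ a + ∑ i, u i • b i ∈ E} :
      Finset (ι → M)) ⊆ (univ.erase (0 : ι → K)).biUnion fun u =>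
        {b : ι → M | LinearIndependent K b ∧ a + ∑ i, u i • b i ∈ E} := by
    intro b hb
    simp only [mem_filter, mem_univ, true_and] at hb
    obtain ⟨hb, u, hu, hmem⟩ := hb
    exact mem_biUnion.mpr ⟨u, mem_erase.mpr ⟨hu, mem_univ _⟩, by simp [hb, hmem]⟩
  calc _ ≤ (∑ u ∈ univ.erase (0 : ι → K),
          #{b : ι → M | LinearIndependent K b ∧ a + ∑ i, u i • b i ∈ E}) *
        (Fintype.card M - 1) := Nat.mul_le_mul_right _ ((card_le_card hsub).trans card_biUnion_le)
    _ ≤ ∑ _u ∈ univ.erase (0 : ι → K), #E * #{b : ι → M | LinearIndependent K b} := by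
        rw [sum_mul]
        exact sum_le_sum fun u hu =>
          card_linearIndependent_add_sum_smul_mem_mul_le (ne_of_mem_erase hu) a E
    _ = _ := by
        rw [sum_const, smul_eq_mul, card_erase_of_mem (mem_univ _), card_univ,
          Fintype.card_fun]

theorem three_mul_card_linearIndependent_exists_add_sum_smul_mem_le [Fintype K] (a : M)
    (E : Finset M) (hE : #E * (3 * Fintype.card K ^ Fintype.card ι) ≤ Fintype.card M) :
    3 * #{b : ι → M | LinearIndependent K b ∧ ∃ u : ι → K, u ≠ 0 ∧ a + ∑ i, u i • b i ∈ E} ≤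
      #{b : ι → M | LinearIndependent K b} := by
  obtain rfl | ⟨x, hx⟩ := E.eq_empty_or_nonempty
  · simp
  set B := #{b : ι → M | LinearIndependent K b ∧ ∃ u : ι → K, u ≠ 0 ∧ a + ∑ i, u i • b i ∈ E}
  set N := Fintype.card M
  obtain ⟨c, hc⟩ : ∃ c, Fintype.card K ^ Fintype.card ι = c + 1 :=
    Nat.exists_eq_add_one.mpr (Nat.pos_of_ne_zero (pow_ne_zero _ Fintype.card_ne_zero))
  have hE₁ : 1 ≤ #E := card_pos.mpr ⟨x, hx⟩
  have hE' : 3 * (c * #E) + 3 * #E ≤ N := by rw [hc] at hE; linarith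
  -- Since `E` is nonempty, `hE` forces `N ≥ 3`, so the factor `N - 1` can be cancelled.
  have hweight : 3 * (c * #E) ≤ N - 1 := by omega
  have hN : 0 < N - 1 := by omega
  refine Nat.le_of_mul_le_mul_right ?_ hN
  calc 3 * B * (N - 1) ≤ 3 * (c * (#E * #{b : ι → M | LinearIndependent K b})) := by
        rw [mul_assoc, ← Nat.add_one_sub_one c, ← hc]
        exact Nat.mul_le_mul_left 3 (card_linearIndependent_exists_add_sum_smul_mem_mul_le a E)
    _ = 3 * (c * #E) * #{b : ι → M | LinearIndependent K b} := by ring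
    _ ≤ _ := by rw [mul_comm _ (N - 1)]; exact Nat.mul_le_mul_right _ hweight

end Frames

section Decoding

variable {K M ι k : Type*} [Field K] [Finite K] [AddCommGroup M] [Module K M] [Fintype ι]
  [DivisionRing k]

/-- The decoder queries `f` on the punctured affine subspace through `a` spanned by `b`,
parametrised by `u ≠ 0`, and outputs `g 0` for a codeword `g` of `C` fitting these values. -/
def DecodesCorrectly (C : Submodule k ((ι → K) → k)) (f p : M → k) (a : M) (b : ι → M) :
    Prop :=
  (∃ g ∈ C, ∀ u : ι → K, u ≠ 0 → g u = f (a + ∑ i, u i • b i)) ∧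
    ∀ g ∈ C, (∀ u : ι → K, u ≠ 0 → g u = f (a + ∑ i, u i • b i)) → g 0 = p a

theorem decodesCorrectly_of_forall_ne_zero {C : Submodule k ((ι → K) → k)} (hC : C ≠ ⊤)
    (htrans : ∀ g ∈ C, ∀ v : ι → K, (fun x => g (v + x)) ∈ C) {f p : M → k}
    (hp : ∀ A : (ι → K) →ᵃ[K] M, Function.Injective A → p ∘ A ∈ C) (a : M) {b : ι → M}
    (hb : LinearIndependent K b)
    (hfp : ∀ u : ι → K, u ≠ 0 → f (a + ∑ i, u i • b i) = p (a + ∑ i, u i • b i)) :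
    DecodesCorrectly C f p a b := by
  let A : (ι → K) →ᵃ[K] M :=
    AffineMap.const K (ι → K) a + (Fintype.linearCombination K b).toAffineMap
  have hA : ∀ u, A u = a + ∑ i, u i • b i := fun u => rfl
  have hpA : p ∘ A ∈ C := hp A ((add_right_injective a).comp hb.fintypeLinearCombination_injective)
  refine ⟨⟨p ∘ A, hpA, fun u hu => (hfp u hu).symm⟩, fun g hg hgf => ?_⟩
  simpa [hA] using Submodule.apply_eq_of_forall_ne_apply_eq hC htrans hg hpA
    (x₀ := 0) fun u hu => (hgf u hu).trans (hfp u hu)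

open scoped Classical in
theorem two_mul_card_le_three_mul_card_decodesCorrectly [DecidableEq ι] [Fintype K] [Fintype M]
    {C : Submodule k ((ι → K) → k)} (hC : C ≠ ⊤)
    (htrans : ∀ g ∈ C, ∀ v : ι → K, (fun x => g (v + x)) ∈ C) {f p : M → k}
    (hp : ∀ A : (ι → K) →ᵃ[K] M, Function.Injective A → p ∘ A ∈ C) (a : M)
    (hclose : #{x | f x ≠ p x} * (3 * Fintype.card K ^ Fintype.card ι) ≤ Fintype.card M) :
    2 * #{b : ι → M | LinearIndependent K b} ≤
      3 * #{b : ι → M | LinearIndependent K b ∧ DecodesCorrectly C f p a b} := by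
  set E : Finset M := {x | f x ≠ p x}
  set bad : Finset (ι → M) :=
    {b | LinearIndependent K b ∧ ∃ u : ι → K, u ≠ 0 ∧ a + ∑ i, u i • b i ∈ E}
  have hbad : bad ⊆ ({b | LinearIndependent K b} : Finset (ι → M)) :=
    monotone_filter_right _ fun _ _ => And.left
  have hgood : ({b | LinearIndependent K b} : Finset (ι → M)) \ bad ⊆
      ({b | LinearIndependent K b ∧ DecodesCorrectly C f p a b} : Finset (ι → M)) := by
    intro b hb
    simp only [mem_sdiff, mem_filter, mem_univ, true_and, not_and, not_exists, E, bad,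
      not_not] at hb ⊢
    exact ⟨hb.1, decodesCorrectly_of_forall_ne_zero hC htrans hp a hb.1 (hb.2 hb.1)⟩
  have h3 : 3 * #bad ≤ #({b | LinearIndependent K b} : Finset (ι → M)) :=
    three_mul_card_linearIndependent_exists_add_sum_smul_mem_le a E hclose
  have hgood_card := card_le_card hgood
  rw [card_sdiff_of_subset hbad] at hgood_card
  omega

end Decoding

theorem stmt_16_general (t m : ℕ)
    (K k : Type) [Field K] [Fintype K] [Field k]
    (Fam : Submodule k ((Fin t → K) → k))
    (hinv : ∀ f ∈ Fam, ∀ A : (Fin t → K) →ᵃ[K] (Fin t → K),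
      Function.Bijective A → f ∘ A ∈ Fam)
    (hproper : Fam ≠ ⊤)
    (f p : (Fin m → K) → k)
    (hp : ∀ A : (Fin t → K) →ᵃ[K] (Fin m → K), Function.Injective A → p ∘ A ∈ Fam)
    (hclose : (Nat.card {x : Fin m → K | f x ≠ p x} : ℚ) / (Fintype.card K : ℚ) ^ m
      ≤ 1 / (3 * (Fintype.card K : ℚ) ^ t))
    (a : Fin m → K) :
    (2 : ℚ) / 3 * (Nat.card {b : Fin t → (Fin m → K) | LinearIndependent K b} : ℚ)
      ≤ (Nat.card {b : Fin t → (Fin m → K) | LinearIndependent K b ∧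
          (∃ g ∈ Fam, ∀ u : Fin t → K, u ≠ 0 → g u = f (a + ∑ i, u i • b i)) ∧
          (∀ g ∈ Fam, (∀ u : Fin t → K, u ≠ 0 → g u = f (a + ∑ i, u i • b i)) →
            g 0 = p a)} : ℚ) := by
  classical
  have htrans : ∀ g ∈ Fam, ∀ v : Fin t → K, (fun x => g (v + x)) ∈ Fam := fun g hg v =>
    hinv g hg (AffineEquiv.constVAdd K (Fin t → K) v).toAffineMap (AffineEquiv.bijective _)
  change _ ≤ (Nat.card {b : Fin t → Fin m → K | LinearIndependent K b ∧
    DecodesCorrectly Fam f p a b} : ℚ)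
  simp only [Nat.card_coe_set_eq, Set.ncard_eq_toFinset_card', Set.toFinset_ofPred] at hclose ⊢
  have hclose' : #{x | f x ≠ p x} * (3 * Fintype.card K ^ Fintype.card (Fin t)) ≤
      Fintype.card (Fin m → K) := by
    rw [div_le_div_iff₀ (by positivity) (by positivity), one_mul] at hclose
    rw [Fintype.card_fun, Fintype.card_fin, Fintype.card_fin]
    exact_mod_cast hclose
  have := two_mul_card_le_three_mul_card_decodesCorrectly hproper htrans hp a hclose'
  rw [div_mul_eq_mul_div, div_le_iff₀ three_pos, mul_comm _ (3 : ℚ)]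
  exact_mod_cast this

theorem stmt_16 (t m : ℕ) (ht : 1 ≤ t) (htm : t ≤ m)
    (K k : Type) [Field K] [Fintype K] [Field k]
    (Fam : Submodule k ((Fin t → K) → k))
    (hinv : ∀ f ∈ Fam, ∀ A : (Fin t → K) →ᵃ[K] (Fin t → K),
      Function.Bijective A → f ∘ A ∈ Fam)
    (hproper : Fam ≠ ⊤)
    (f p : (Fin m → K) → k)
    (hp : ∀ A : (Fin t → K) →ᵃ[K] (Fin m → K), Function.Injective A → p ∘ A ∈ Fam)
    (hclose : (Nat.card {x : Fin m → K | f x ≠ p x} : ℚ) / (Fintype.card K : ℚ) ^ m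
      ≤ 1 / (3 * (Fintype.card K : ℚ) ^ t))
    (a : Fin m → K) :
    (2 : ℚ) / 3 * (Nat.card {b : Fin t → (Fin m → K) | LinearIndependent K b} : ℚ)
      ≤ (Nat.card {b : Fin t → (Fin m → K) | LinearIndependent K b ∧
          (∃ g ∈ Fam, ∀ u : Fin t → K, u ≠ 0 → g u = f (a + ∑ i, u i • b i)) ∧
          (∀ g ∈ Fam, (∀ u : Fin t → K, u ≠ 0 → g u = f (a + ∑ i, u i • b i)) →
            g 0 = p a)} : ℚ) :=
  stmt_16_general t m K k Fam hinv hproper f p hp hclose a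
end

section
/- Let Q = 2^s, c ≤ s, d = (1 - 2^{-c})Q, m ≥ 1, and b = 1 + ⌈log_2 m⌉ with b ≤ c. Let d⃗ = (d_1,...,d_m) ∈ {0,...,Q-1}^m and suppose there exists j ∈ {s-c,...,s-b} such that for every i ∈ [m] and every ℓ ∈ {0,...,b-1}, the binary digit d_i^{(j+ℓ)} equals 0. Then for every e⃗ ≤_2 d⃗ (coordinatewise binary shadow), the value e = (Σ_{i=1}^m e_i) mod* Q satisfies e ≤ d; i.e., the binary digit e^{(j+b-1)} of e is 0. -/
/-! Multiplication by `2 ^ l` modulo `2 ^ s - 1` rotates the `s` binary digits cyclically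
(`rotateBits`). Rotating every `e i` right by `j + b` places moves the common block of zero
digits to the top `b` positions, so each rotated value is below `2 ^ (s - b)` and, as
`m ≤ 2 ^ (b - 1)`, their sum `T` is below `2 ^ (s - 1)`. Rotating `T` back gives a number below
`2 ^ s`, congruent to `∑ i, e i` modulo `2 ^ s - 1`, whose digit `j + b - 1` is the top digit of
`T`, hence zero; and a number below `2 ^ s` with a zero digit at position `≥ s - c` is at most
`2 ^ s - 2 ^ (s - c)`. -/

lemma digit_two_eq_toNat_testBit (n i : ℕ) : digit 2 n i = (n.testBit i).toNat := by
  rw [digit, Nat.getD_digits n i le_rfl, Nat.toNat_testBit]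

lemma testBit_eq_false_of_pShadow_two {a b k : ℕ} (h : pShadow 2 a b) (hk : digit 2 b k = 0) :
    a.testBit k = false := by
  simpa [digit_two_eq_toNat_testBit, hk] using h k

lemma le_of_pShadow_two {a b : ℕ} (h : pShadow 2 a b) : a ≤ b := by
  refine Nat.le_of_testBit fun k hk => ?_
  have := h k
  rw [digit_two_eq_toNat_testBit, digit_two_eq_toNat_testBit, hk] at this
  cases hb : b.testBit k <;> simp_all

lemma mod_two_pow_lt_of_testBit {n j a : ℕ} (h : ∀ k, j ≤ k → k < a → n.testBit k = false) :
    n % 2 ^ a < 2 ^ j := by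
  refine Nat.lt_pow_two_of_testBit _ fun k hk => ?_
  rw [Nat.testBit_mod_two_pow]
  by_cases hka : k < a
  · simp [h k hk hka]
  · simp [hka]

lemma add_two_pow_lt_of_testBit_eq_false {n i K : ℕ} (hn : n < 2 ^ K) (hi : i < K)
    (hbit : n.testBit i = false) : n + 2 ^ i < 2 ^ K := by
  have hK : 2 ^ K = 2 ^ i * (2 * 2 ^ (K - i - 1)) := by
    rw [← pow_succ', ← pow_add]; congr 1; omega
  have heven : n / 2 ^ i % 2 = 0 := by
    simpa [Nat.testBit_eq_decide_div_mod_eq] using hbit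
  have hq : n / 2 ^ i < 2 * 2 ^ (K - i - 1) := Nat.div_lt_of_lt_mul (hK ▸ hn)
  calc n + 2 ^ i < 2 ^ i * (n / 2 ^ i + 1) + 2 ^ i := by
        have := Nat.lt_mul_div_succ n (Nat.two_pow_pos i); omega
    _ = 2 ^ i * (n / 2 ^ i + 2) := by ring
    _ ≤ 2 ^ i * (2 * 2 ^ (K - i - 1)) := Nat.mul_le_mul_left _ (by omega)
    _ = 2 ^ K := hK.symm

lemma modStar_eq_of_modEq {Q x y : ℕ} (hy : y < Q) (hxy : x = 0 ↔ y = 0)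
    (h : x ≡ y [MOD Q - 1]) : modStar Q x = y := by
  unfold modStar
  split_ifs with hx
  · exact (hxy.mp hx).symm
  · have hy0 : y ≠ 0 := fun h0 => hx (hxy.mpr h0)
    have hpred : x - 1 ≡ y - 1 [MOD Q - 1] :=
      Nat.ModEq.add_right_cancel' 1 (by rwa [Nat.sub_add_cancel (by omega),
        Nat.sub_add_cancel (by omega)])
    rw [hpred, Nat.mod_eq_of_lt (by omega)]
    omega

lemma one_modEq_two_pow (n : ℕ) : 1 ≡ 2 ^ n [MOD 2 ^ n - 1] :=
  (Nat.modEq_iff_dvd' Nat.one_le_two_pow).mpr dvd_rfl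

/-- The right rotation by `k` of `x`, viewed as a `(k + l)`-bit word when `x < 2 ^ (k + l)`. -/
def rotateBits (k l x : ℕ) : ℕ := 2 ^ l * (x % 2 ^ k) + x / 2 ^ k

lemma two_pow_mul_modEq_rotateBits (k l x : ℕ) :
    2 ^ l * x ≡ rotateBits k l x [MOD 2 ^ (k + l) - 1] :=
  calc 2 ^ l * x = 2 ^ (k + l) * (x / 2 ^ k) + 2 ^ l * (x % 2 ^ k) := by
        conv_lhs => rw [← Nat.div_add_mod x (2 ^ k)]
        ring
    _ ≡ 1 * (x / 2 ^ k) + 2 ^ l * (x % 2 ^ k) [MOD 2 ^ (k + l) - 1] :=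
        ((one_modEq_two_pow _).symm.mul_right _).add_right _
    _ = rotateBits k l x := by rw [rotateBits]; ring

lemma rotateBits_lt {k l n x : ℕ} (hlo : x % 2 ^ k < 2 ^ n) (hhi : x / 2 ^ k < 2 ^ l) :
    rotateBits k l x < 2 ^ (l + n) :=
  calc rotateBits k l x < 2 ^ l * (x % 2 ^ k + 1) := by rw [rotateBits]; linarith
    _ ≤ 2 ^ (l + n) := by rw [pow_add]; exact Nat.mul_le_mul_left _ hlo

lemma testBit_rotateBits {k l x i : ℕ} (hx : x < 2 ^ (k + l)) (hi : i < l) :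
    (rotateBits k l x).testBit i = x.testBit (i + k) := by
  have hhi : x / 2 ^ k < 2 ^ l := Nat.div_lt_of_lt_mul (by rwa [← pow_add])
  rw [rotateBits, Nat.testBit_two_pow_mul_add _ hhi, if_pos hi, Nat.testBit_div_two_pow]

lemma rotateBits_eq_zero_iff {k l x : ℕ} : rotateBits k l x = 0 ↔ x = 0 := by
  constructor
  · intro h
    rw [rotateBits, Nat.add_eq_zero_iff, mul_eq_zero] at h
    rw [← Nat.div_add_mod x (2 ^ k), h.2]
    simpa using h.1
  · rintro rfl
    simp [rotateBits]

lemma rotateBits_lt_of_testBit {x j b t : ℕ} (hx : x < 2 ^ (j + b + t))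
    (hzero : ∀ l < b, x.testBit (j + l) = false) : rotateBits (j + b) t x < 2 ^ (t + j) := by
  refine rotateBits_lt (mod_two_pow_lt_of_testBit fun k hjk hk => ?_)
    (Nat.div_lt_of_lt_mul (by rwa [← pow_add]))
  simpa [Nat.add_sub_cancel' hjk] using hzero (k - j) (by omega)

lemma sum_lt_two_pow_of_lt {ι : Type*} [Fintype ι] {f : ι → ℕ} {k n : ℕ}
    (hcard : Fintype.card ι ≤ 2 ^ k) (hf : ∀ i, f i < 2 ^ n) : ∑ i, f i < 2 ^ (n + k) :=
  calc ∑ i, f i ≤ Fintype.card ι * (2 ^ n - 1) := by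
        simpa using Finset.sum_le_card_nsmul Finset.univ f _
          fun i _ => Nat.le_sub_one_of_lt (hf i)
    _ ≤ 2 ^ k * (2 ^ n - 1) := Nat.mul_le_mul_right _ hcard
    _ < 2 ^ k * 2 ^ n :=
        Nat.mul_lt_mul_of_pos_left (Nat.sub_lt (Nat.two_pow_pos _) one_pos) (Nat.two_pow_pos _)
    _ = 2 ^ (n + k) := by rw [← pow_add, add_comm]

lemma sum_modEq_rotateBits_sum_rotateBits {ι : Type*} (s : Finset ι) (x : ι → ℕ) (a t : ℕ) :
    ∑ i ∈ s, x i ≡ rotateBits t a (∑ i ∈ s, rotateBits a t (x i)) [MOD 2 ^ (a + t) - 1] :=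
  calc ∑ i ∈ s, x i = 1 * ∑ i ∈ s, x i := (one_mul _).symm
    _ ≡ 2 ^ a * (2 ^ t * ∑ i ∈ s, x i) [MOD 2 ^ (a + t) - 1] := by
        rw [← mul_assoc, ← pow_add]
        exact (one_modEq_two_pow _).mul_right _
    _ ≡ 2 ^ a * ∑ i ∈ s, rotateBits a t (x i) [MOD 2 ^ (a + t) - 1] := by
        refine Nat.ModEq.mul_left _ ?_
        rw [Finset.mul_sum]
        exact Nat.ModEq.sum fun i _ => two_pow_mul_modEq_rotateBits _ _ _
    _ ≡ _ [MOD 2 ^ (a + t) - 1] := by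
        rw [add_comm a t]
        exact two_pow_mul_modEq_rotateBits _ _ _

theorem stmt_19_general (s c b m Q : ℕ) (hb : 1 ≤ b)
    (hmb : m ≤ 2 ^ (b - 1)) (hbc : b ≤ c) (hcs : c ≤ s) (hQ : Q = 2 ^ s)
    (d : Fin m → ℕ) (hd : ∀ i, d i ≤ Q - 1)
    (j : ℕ) (hj1 : s - c ≤ j) (hj2 : j ≤ s - b)
    (hzero : ∀ i, ∀ l < b, digit 2 (d i) (j + l) = 0) :
    ∀ e : Fin m → ℕ, (∀ i, pShadow 2 (e i) (d i)) →
      digit 2 (modStar Q (∑ i, e i)) (j + b - 1) = 0 ∧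
      modStar Q (∑ i, e i) ≤ Q - 2 ^ (s - c) := by
  intro e he
  obtain ⟨t, rfl⟩ : ∃ t, s = j + b + t := ⟨s - (j + b), by omega⟩
  subst hQ
  have he_lt : ∀ i, e i < 2 ^ (j + b + t) := fun i => by
    have := (le_of_pShadow_two (he i)).trans (hd i)
    have := Nat.one_le_two_pow (n := j + b + t)
    omega
  set T := ∑ i, rotateBits (j + b) t (e i) with hT
  have hT_lt : T < 2 ^ (t + j + (b - 1)) :=
    sum_lt_two_pow_of_lt (by simpa using hmb) fun i => rotateBits_lt_of_testBit (he_lt i)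
      fun l hl => testBit_eq_false_of_pShadow_two (he i) (hzero i l hl)
  set W := rotateBits t (j + b) T with hW
  have hT_lt' : T < 2 ^ (t + (j + b)) := hT_lt.trans_le (Nat.pow_le_pow_right two_pos (by omega))
  have hW_lt : W < 2 ^ (j + b + t) :=
    rotateBits_lt (Nat.mod_lt _ (Nat.two_pow_pos t)) (Nat.div_lt_of_lt_mul (by rwa [← pow_add]))
  have hbit : W.testBit (j + b - 1) = false := by
    rw [hW, testBit_rotateBits hT_lt' (by omega)]
    exact Nat.testBit_lt_two_pow (hT_lt.trans_eq (by congr 1; omega))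
  have hzero_iff : ∑ i, e i = 0 ↔ W = 0 := by
    simp only [hW, rotateBits_eq_zero_iff, hT, Finset.sum_eq_zero_iff]
  rw [modStar_eq_of_modEq hW_lt hzero_iff (sum_modEq_rotateBits_sum_rotateBits _ e _ _),
    digit_two_eq_toNat_testBit, hbit]
  refine ⟨rfl, ?_⟩
  have := add_two_pow_lt_of_testBit_eq_false hW_lt (by omega) hbit
  have := Nat.pow_le_pow_right two_pos (show j + b + t - c ≤ j + b - 1 by omega)
  omega

theorem stmt_19 (s c b m Q : ℕ) (hs : 1 ≤ s) (hm : 1 ≤ m) (hb : 1 ≤ b)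
    (hmb : m ≤ 2 ^ (b - 1)) (hbc : b ≤ c) (hcs : c ≤ s) (hQ : Q = 2 ^ s)
    (d : Fin m → ℕ) (hd : ∀ i, d i ≤ Q - 1)
    (j : ℕ) (hj1 : s - c ≤ j) (hj2 : j ≤ s - b)
    (hzero : ∀ i, ∀ l < b, digit 2 (d i) (j + l) = 0) :
    ∀ e : Fin m → ℕ, (∀ i, pShadow 2 (e i) (d i)) →
      digit 2 (modStar Q (∑ i, e i)) (j + b - 1) = 0 ∧
      modStar Q (∑ i, e i) ≤ Q - 2 ^ (s - c) :=
  stmt_19_general s c b m Q hb hmb hbc hcs hQ d hd j hj1 hj2 hzero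
end
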